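/- Let G be a dense, K_4^3 ∪ e-free 3-graph with λ(G) > √3/18, and let x be an optimum weight vector for G. Then for any two distinct vertices a and b of G, x_a + x_b ≤ (3 − √3)/3. -/

import Mathlib

open Finset

/-- An `r`-uniform hypergraph (r-graph) with vertices drawn from `ℕ`. -/
structure HyperGraph (r : ℕ) where
  verts : Finset ℕ
  edges : Finset (Finset ℕ)
  edges_sub : ∀ e ∈ edges, e ⊆ verts
  card_eq : ∀ e ∈ edges, e.card = r

/-- A 3-uniform hypergraph (3-graph). -/
abbrev ThreeGraph := HyperGraph 3

/-- A feasible weight vector on `G`: nonnegative weights on the vertices summing to 1. -/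
def HyperGraph.IsFeasible {r : ℕ} (G : HyperGraph r) (w : ℕ → ℝ) : Prop :=
  (∀ v ∈ G.verts, 0 ≤ w v) ∧ ∑ v ∈ G.verts, w v = 1

/-- The Lagrangian function `λ(G, w) = Σ_{e ∈ E(G)} Π_{v ∈ e} w v`. -/
noncomputable def HyperGraph.lagFun {r : ℕ} (G : HyperGraph r) (w : ℕ → ℝ) : ℝ :=
  ∑ e ∈ G.edges, ∏ v ∈ e, w v

/-- The Lagrangian `λ(G)`: the maximum of `λ(G, w)` over feasible weight vectors. -/
noncomputable def HyperGraph.lag {r : ℕ} (G : HyperGraph r) : ℝ :=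
  sSup {x : ℝ | ∃ w, G.IsFeasible w ∧ G.lagFun w = x}

/-- `G` contains a copy of `F`: an injection of the vertices of `F` into those of `G`
mapping every edge of `F` to an edge of `G`. -/
def HyperGraph.ContainsCopy {r : ℕ} (G F : HyperGraph r) : Prop :=
  ∃ f : ℕ → ℕ, Set.InjOn f ↑F.verts ∧ (∀ v ∈ F.verts, f v ∈ G.verts) ∧
    ∀ e ∈ F.edges, e.image f ∈ G.edges

/-- `G` is `F`-free. -/
def HyperGraph.Free {r : ℕ} (G F : HyperGraph r) : Prop := ¬ G.ContainsCopy F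

/-- `H` is a subgraph of `G`. -/
def HyperGraph.IsSubgraph {r : ℕ} (H G : HyperGraph r) : Prop :=
  H.verts ⊆ G.verts ∧ H.edges ⊆ G.edges

/-- `G` is dense: every proper subgraph has strictly smaller Lagrangian. -/
def HyperGraph.LagDense {r : ℕ} (G : HyperGraph r) : Prop :=
  ∀ H : HyperGraph r, H.IsSubgraph G → (H.verts ≠ G.verts ∨ H.edges ≠ G.edges) →
    H.lag < G.lag

/-- The Lagrangian density `π_λ(F) = sup { r! · λ(G) : G is F-free }`. -/
noncomputable def lagDensity {r : ℕ} (F : HyperGraph r) : ℝ :=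
  sSup {x : ℝ | ∃ G : HyperGraph r, G.Free F ∧ x = (Nat.factorial r : ℝ) * G.lag}

/-- An optimum weight vector for `G`. -/
def HyperGraph.IsOptimal {r : ℕ} (G : HyperGraph r) (w : ℕ → ℝ) : Prop :=
  G.IsFeasible w ∧ G.lagFun w = G.lag

/-- `K_4^3 ∪ e`: the disjoint union of the complete 3-graph on `{1,2,3,4}`
and the single edge `{5,6,7}`. -/
def K43e : ThreeGraph where
  verts := {1, 2, 3, 4, 5, 6, 7}
  edges := {{1, 2, 3}, {1, 2, 4}, {1, 3, 4}, {2, 3, 4}, {5, 6, 7}}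
  edges_sub := by decide
  card_eq := by decide

/-!
At an optimum `x`, moving weight `ε` from a vertex `i` with `x i > 0` to a vertex `u` changes
`λ(G, x)` by `ε (L_u − L_i) + O(ε²)`, where `L_v = ∂λ/∂x_v` is the link polynomial of `v`.
Hence a vertex `a` of positive weight has maximal link, and Euler's identity
`Σ_v x_v L_v = 3 λ(G, x)` gives `L_a ≥ 3 λ(G)`. On the other hand `L_a` is a sum of products
over pairs in `V ∖ {a}`, so `2 L_a ≤ (1 − x_a)² − x_b² = (1 − x_a − x_b)(1 − x_a + x_b)`,
which is at most `1 − x_a − x_b` when `x_b ≤ x_a`. Thus `6 λ(G) ≤ 1 − (x_a + x_b)`.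
-/

open Filter Topology Function

theorem Finset.two_mul_sum_powersetCard_two {ι R : Type*} [DecidableEq ι] [CommRing R]
    (f : ι → R) (s : Finset ι) :
    2 * ∑ p ∈ s.powersetCard 2, ∏ i ∈ p, f i = (∑ i ∈ s, f i) ^ 2 - ∑ i ∈ s, f i ^ 2 := by
  induction s using Finset.induction_on with
  | empty => simp [powersetCard_eq_empty.2 (show #(∅ : Finset ι) < 2 by simp)]
  | insert a s ha ih =>
    have hinj : Set.InjOn (insert a) (s.powersetCard 1 : Set (Finset ι)) := fun t ht t' ht' h => by
      have hat : a ∉ t := fun h' => ha ((mem_powersetCard.1 ht).1 h')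
      have hat' : a ∉ t' := fun h' => ha ((mem_powersetCard.1 ht').1 h')
      rw [← erase_insert hat, ← erase_insert hat', h]
    have hdisj : Disjoint (s.powersetCard 2) ((s.powersetCard 1).image (insert a)) :=
      disjoint_left.2 fun p hp hp' => by
        obtain ⟨t, -, rfl⟩ := mem_image.1 hp'
        exact ha ((mem_powersetCard.1 hp).1 (mem_insert_self a t))
    have hnew : ∑ p ∈ (s.powersetCard 1).image (insert a), ∏ i ∈ p, f i = f a * ∑ i ∈ s, f i := by
      rw [sum_image hinj, powersetCard_one, sum_map, mul_sum]
      refine sum_congr rfl fun i hi => ?_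
      simp [prod_insert, (ne_of_mem_of_not_mem hi ha).symm]
    rw [powersetCard_succ_insert ha, sum_union hdisj, hnew, sum_insert ha, sum_insert ha]
    linear_combination ih

section
variable {ι R : Type*} [DecidableEq ι] [CommRing R] (x : ι → R) (u : ι) (t : R)

theorem Finset.sum_update_eq_add_sub {s : Finset ι} (hu : u ∈ s) :
    ∑ w ∈ s, update x u t w = ∑ w ∈ s, x w + (t - x u) := by
  rw [sum_update_of_mem hu, sdiff_singleton_eq_erase, ← add_sum_erase s x hu]
  ring

theorem Finset.prod_update_eq_add_mul (s : Finset ι) :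
    ∏ w ∈ s, update x u t w =
      ∏ w ∈ s, x w + (t - x u) * if u ∈ s then ∏ w ∈ s.erase u, x w else 0 := by
  split_ifs with hu
  · rw [prod_update_of_mem hu, sdiff_singleton_eq_erase, ← mul_prod_erase s x hu]
    ring
  · rw [prod_update_of_notMem hu, mul_zero, add_zero]

theorem Finset.sum_prod_update_eq_add_mul {κ : Type*} (J : Finset κ) (s : κ → Finset ι) :
    ∑ j ∈ J, ∏ w ∈ s j, update x u t w =
      ∑ j ∈ J, ∏ w ∈ s j, x w + (t - x u) * ∑ j ∈ J with u ∈ s j, ∏ w ∈ (s j).erase u, x w := by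
  simp_rw [prod_update_eq_add_mul, sum_add_distrib, mul_sum, sum_filter, mul_ite, mul_zero]

end

def moveWeight (x : ℕ → ℝ) (i u : ℕ) (ε : ℝ) : ℕ → ℝ :=
  update (update x u (x u + ε)) i (x i - ε)

namespace HyperGraph

variable {r : ℕ} (G : HyperGraph r) {x : ℕ → ℝ}

/-- The link polynomial of `v`, i.e. the partial derivative `∂λ(G, x)/∂x_v`. -/
noncomputable def link (x : ℕ → ℝ) (v : ℕ) : ℝ :=
  ∑ e ∈ G.edges with v ∈ e, ∏ w ∈ e.erase v, x w

theorem lagFun_le_card_edges (hx : G.IsFeasible x) : G.lagFun x ≤ #G.edges := by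
  have hle : ∀ v ∈ G.verts, x v ≤ 1 := fun v hv =>
    hx.2 ▸ single_le_sum hx.1 hv
  calc G.lagFun x ≤ ∑ _e ∈ G.edges, (1 : ℝ) :=
        sum_le_sum fun e he => prod_le_one (fun v hv => hx.1 v (G.edges_sub e he hv))
          fun v hv => hle v (G.edges_sub e he hv)
    _ = #G.edges := by simp

theorem lagFun_le_lag (hx : G.IsFeasible x) : G.lagFun x ≤ G.lag :=
  le_csSup ⟨#G.edges, by rintro _ ⟨w, hw, rfl⟩; exact G.lagFun_le_card_edges hw⟩ ⟨x, hx, rfl⟩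

theorem sum_mul_link (x : ℕ → ℝ) : ∑ v ∈ G.verts, x v * G.link x v = r * G.lagFun x := by
  have hedge : ∀ e ∈ G.edges,
      ∑ v ∈ G.verts, (if v ∈ e then ∏ w ∈ e, x w else 0) = r * ∏ w ∈ e, x w := by
    intro e he
    rw [sum_ite_mem, inter_eq_right.2 (G.edges_sub e he), sum_const, G.card_eq e he, nsmul_eq_mul]
  calc ∑ v ∈ G.verts, x v * G.link x v
      = ∑ v ∈ G.verts, ∑ e ∈ G.edges with v ∈ e, ∏ w ∈ e, x w :=
        sum_congr rfl fun v _ => by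
          rw [link, mul_sum]
          exact sum_congr rfl fun e he => mul_prod_erase e x (mem_filter.1 he).2
    _ = ∑ e ∈ G.edges, ∑ v ∈ G.verts, if v ∈ e then ∏ w ∈ e, x w else 0 := by
        simp_rw [sum_filter]
        exact sum_comm
    _ = r * G.lagFun x := by rw [sum_congr rfl hedge, lagFun, mul_sum]

theorem lagFun_update (u : ℕ) (t : ℝ) :
    G.lagFun (update x u t) = G.lagFun x + (t - x u) * G.link x u :=
  sum_prod_update_eq_add_mul x u t G.edges fun e => e

theorem link_update (u i : ℕ) (t : ℝ) :
    G.link (update x u t) i = G.link x i + (t - x u) *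
      ∑ e ∈ {e ∈ G.edges | i ∈ e} with u ∈ e.erase i, ∏ w ∈ (e.erase i).erase u, x w :=
  sum_prod_update_eq_add_mul x u t _ fun e : Finset ℕ => e.erase i

theorem lagFun_moveWeight {u i : ℕ} (hui : u ≠ i) (ε : ℝ) :
    G.lagFun (moveWeight x i u ε) =
      G.lagFun x + ε * (G.link x u - G.link (update x u (x u + ε)) i) := by
  rw [moveWeight, lagFun_update, lagFun_update, update_of_ne hui.symm]
  ring

variable {G} in
theorem IsFeasible.moveWeight (hx : G.IsFeasible x) {u i : ℕ} (hu : u ∈ G.verts)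
    (hi : i ∈ G.verts) (hui : u ≠ i) {ε : ℝ} (hε : 0 ≤ ε) (hεi : ε ≤ x i) :
    G.IsFeasible (moveWeight x i u ε) := by
  refine ⟨fun v hv => ?_, ?_⟩
  · have := hx.1 v hv
    simp only [_root_.moveWeight, update_apply]
    split_ifs <;> subst_vars <;> linarith
  · rw [_root_.moveWeight, sum_update_eq_add_sub _ _ _ hi, sum_update_eq_add_sub _ _ _ hu,
      update_of_ne hui.symm, hx.2]
    ring

theorem link_le_link_of_isOptimal (hx : G.IsOptimal x) {u i : ℕ} (hu : u ∈ G.verts)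
    (hi : i ∈ G.verts) (hpos : 0 < x i) : G.link x u ≤ G.link x i := by
  rcases eq_or_ne u i with rfl | hui
  · rfl
  have hmove : ∀ ε ∈ Set.Ioc 0 (x i), G.link x u ≤ G.link (update x u (x u + ε)) i := by
    rintro ε ⟨hε, hεi⟩
    have h := G.lagFun_le_lag (hx.1.moveWeight hu hi hui hε.le hεi)
    rw [lagFun_moveWeight G hui, hx.2] at h
    nlinarith
  refine ge_of_tendsto ?_ (eventually_of_mem (Ioc_mem_nhdsGT hpos) hmove)
  simp_rw [link_update, add_sub_cancel_left]
  exact ((continuous_const.add (continuous_id.mul continuous_const)).tendsto' 0 _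
    (by simp)).mono_left nhdsWithin_le_nhds

theorem mul_lag_le_link (hx : G.IsOptimal x) {a : ℕ} (ha : a ∈ G.verts) (hpos : 0 < x a) :
    r * G.lag ≤ G.link x a :=
  calc r * G.lag = ∑ v ∈ G.verts, x v * G.link x v := by rw [sum_mul_link, hx.2]
    _ ≤ ∑ v ∈ G.verts, x v * G.link x a := sum_le_sum fun v hv =>
        mul_le_mul_of_nonneg_left (G.link_le_link_of_isOptimal hx hv ha hpos) (hx.1.1 v hv)
    _ = G.link x a := by rw [← sum_mul, hx.1.2, one_mul]

theorem link_le_sum_powersetCard (hx : ∀ v ∈ G.verts, 0 ≤ x v) (a : ℕ) :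
    G.link x a ≤ ∑ p ∈ (G.verts.erase a).powersetCard (r - 1), ∏ v ∈ p, x v := by
  have hinj : Set.InjOn (fun e : Finset ℕ => e.erase a) ({e ∈ G.edges | a ∈ e} : Finset _) :=
    fun e he e' he' h => by
      rw [← insert_erase (mem_filter.1 he).2, ← insert_erase (mem_filter.1 he').2]
      exact congrArg (insert a) h
  rw [link, ← sum_image (f := fun p => ∏ v ∈ p, x v) hinj]
  refine sum_le_sum_of_subset_of_nonneg (fun p hp => ?_) fun p hp _ =>
    prod_nonneg fun v hv => hx v (mem_of_mem_erase ((mem_powersetCard.1 hp).1 hv))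
  obtain ⟨e, he, rfl⟩ := mem_image.1 hp
  obtain ⟨he, hae⟩ := mem_filter.1 he
  exact mem_powersetCard.2 ⟨erase_subset_erase a (G.edges_sub e he),
    by rw [card_erase_of_mem hae, G.card_eq e he]⟩

end HyperGraph

theorem ThreeGraph.two_mul_link_le (G : ThreeGraph) {x : ℕ → ℝ} (hx : G.IsFeasible x)
    {a b : ℕ} (ha : a ∈ G.verts) (hb : b ∈ G.verts) (hab : a ≠ b) :
    2 * G.link x a ≤ (1 - x a) ^ 2 - x b ^ 2 := by
  have hsum : ∑ v ∈ G.verts.erase a, x v = 1 - x a := by rw [sum_erase_eq_sub ha, hx.2]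
  have hsq : x b ^ 2 ≤ ∑ v ∈ G.verts.erase a, x v ^ 2 :=
    single_le_sum (f := fun v => x v ^ 2) (fun v _ => sq_nonneg (x v)) (mem_erase.2 ⟨hab.symm, hb⟩)
  have hpairs := G.link_le_sum_powersetCard hx.1 a
  have hsquare := two_mul_sum_powersetCard_two x (G.verts.erase a)
  rw [hsum] at hsquare
  linarith

theorem weight_pair_bound_general (G : ThreeGraph)
    (hlag : Real.sqrt 3 / 18 < G.lag) (x : ℕ → ℝ) (hx : G.IsOptimal x)
    (a b : ℕ) (ha : a ∈ G.verts) (hb : b ∈ G.verts) (hab : a ≠ b) :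
    x a + x b ≤ (3 - Real.sqrt 3) / 3 := by
  wlog hba : x b ≤ x a generalizing a b
  · rw [add_comm]
    exact this b a hb ha hab.symm (le_of_not_ge hba)
  have hsqrt : Real.sqrt 3 ≤ 3 := by
    rw [Real.sqrt_le_left (by norm_num)]; norm_num
  rcases (hx.1.1 a ha).eq_or_lt with hzero | hpos
  · linarith [hx.1.1 b hb]
  have hlink := G.mul_lag_le_link hx ha hpos
  have hpair := G.two_mul_link_le hx.1 ha hb hab
  have hsum : x a + x b ≤ 1 := hx.1.2 ▸ add_le_sum hx.1.1 ha hb hab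
  push_cast at hlink
  nlinarith [mul_nonneg (sub_nonneg.2 hsum) (sub_nonneg.2 hba)]

/-- For a dense `K_4^3 ∪ e`-free 3-graph `G` with `λ(G) > √3/18` and an optimum
weight vector `x`, any two distinct vertices `a, b` satisfy
`x a + x b ≤ (3 − √3)/3`. -/
theorem weight_pair_bound (G : ThreeGraph) (hdense : G.LagDense) (hfree : G.Free K43e)
    (hlag : Real.sqrt 3 / 18 < G.lag) (x : ℕ → ℝ) (hx : G.IsOptimal x)
    (a b : ℕ) (ha : a ∈ G.verts) (hb : b ∈ G.verts) (hab : a ≠ b) :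
    x a + x b ≤ (3 - Real.sqrt 3) / 3 :=
  weight_pair_bound_general G hlag x hx a b ha hb hab
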